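/- For every u ∈ ℝ and v ∈ (0, π), one has Im(1/(1 + e^{−(u+iv)})) > 0, and for every u ∈ ℝ and v ∈ (−π, 0), one has Im(1/(1 + e^{−(u+iv)})) < 0. Consequently, for each fixed v ∈ (−π, 0), the function u ↦ −Im Li₂(−e^{u+iv}) is strictly concave on ℝ, and for each fixed v ∈ (0, π), the function u ↦ Im Li₂(−e^{u+iv}) is strictly concave on ℝ. -/

import Mathlib

open Real

/-- The dilogarithm `Li₂(z) = -∫₀¹ Log(1 - z t) / t dt`. -/
noncomputable def Li2 (z : ℂ) : ℂ :=
  -∫ t in (0:ℝ)..(1:ℝ), Complex.log (1 - z * (t : ℂ)) / (t : ℂ)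

/-!
`Im (1 + e^{-z})⁻¹ = e^{-Re z} sin (Im z) / |1 + e^{-z}|²` has the sign of `sin (Im z)`.
Substituting `s = r t` gives `Li₂(-c r) = -∫₀^r Log(1 + c s) / s ds`; for `Im c ≠ 0` the
integrand is the difference quotient at `0` of the differentiable function `s ↦ Log(1 + c s)`,
hence continuous, and the fundamental theorem of calculus gives
`d/du Li₂(-e^{u+iv}) = -Log(1 + e^{u+iv})`. Differentiating once more, the second derivative of
`u ↦ Im Li₂(-e^{u+iv})` is `-Im (1 + e^{-(u+iv)})⁻¹`, of sign opposite to that of `sin v`.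
-/

open Complex (I slitPlane normSq)

lemma HasDerivAt.complex_im {f : ℝ → ℂ} {f' : ℂ} {x : ℝ} (hf : HasDerivAt f f' x) :
    HasDerivAt (fun x => (f x).im) f'.im x :=
  Complex.imCLM.hasFDerivAt.comp_hasDerivAt x hf

lemma strictConcaveOn_univ_of_hasDerivAt_of_hasDerivAt_neg {f f' f'' : ℝ → ℝ}
    (hf : ∀ x, HasDerivAt f (f' x) x) (hf' : ∀ x, HasDerivAt f' (f'' x) x)
    (hf'' : ∀ x, f'' x < 0) : StrictConcaveOn ℝ Set.univ f := by
  have hderiv : deriv f = f' := funext fun x => (hf x).deriv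
  refine StrictAntiOn.strictConcaveOn_of_deriv convex_univ
    (continuous_iff_continuousAt.2 fun x => (hf x).continuousAt).continuousOn ?_
  rw [hderiv]
  exact (strictAnti_of_hasDerivAt_neg hf' hf'').strictAntiOn _

lemma im_inv_one_add_exp_neg (z : ℂ) :
    ((1 + Complex.exp (-z))⁻¹).im =
      Real.exp (-z.re) * Real.sin z.im / normSq (1 + Complex.exp (-z)) := by
  simp [Complex.inv_im, Complex.exp_im]

lemma one_add_exp_neg_ne_zero {z : ℂ} (hz : Real.sin z.im ≠ 0) :
    1 + Complex.exp (-z) ≠ 0 := by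
  intro h
  have := congrArg Complex.im h
  simp [Complex.exp_im, hz] at this

lemma im_inv_one_add_exp_neg_pos {z : ℂ} (hz : 0 < Real.sin z.im) :
    0 < ((1 + Complex.exp (-z))⁻¹).im := by
  rw [im_inv_one_add_exp_neg]
  exact div_pos (mul_pos (Real.exp_pos _) hz)
    (Complex.normSq_pos.2 (one_add_exp_neg_ne_zero hz.ne'))

lemma im_inv_one_add_exp_neg_neg {z : ℂ} (hz : Real.sin z.im < 0) :
    ((1 + Complex.exp (-z))⁻¹).im < 0 := by
  rw [im_inv_one_add_exp_neg]
  exact div_neg_of_neg_of_pos (mul_neg_of_pos_of_neg (Real.exp_pos _) hz)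
    (Complex.normSq_pos.2 (one_add_exp_neg_ne_zero hz.ne))

lemma hasDerivAt_log_one_add_exp {z : ℂ} (hz : 1 + Complex.exp z ∈ slitPlane) :
    HasDerivAt (fun w => Complex.log (1 + Complex.exp w)) (1 + Complex.exp (-z))⁻¹ z := by
  have h := ((Complex.hasDerivAt_exp z).const_add 1).clog hz
  convert h using 1
  have h0 : 1 + Complex.exp z ≠ 0 := Complex.slitPlane_ne_zero hz
  rw [Complex.exp_neg]
  field_simp
  rw [add_comm (Complex.exp z), div_self h0]

lemma one_add_mul_ofReal_mem_slitPlane {c : ℂ} (hc : c.im ≠ 0) (s : ℝ) :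
    1 + c * s ∈ slitPlane := by
  rcases eq_or_ne s 0 with rfl | hs
  · simp
  · exact Complex.mem_slitPlane_iff.2 (Or.inr (by simp [hc, hs]))

lemma Li2_neg_mul_ofReal (c : ℂ) (r : ℝ) :
    Li2 (-(c * r)) = -∫ s in (0:ℝ)..r, dslope (fun s : ℝ => Complex.log (1 + c * s)) 0 s := by
  -- not at `t = 0`, where the left side is `Log 1 / 0 = 0` but `dslope` takes the value `c`
  have hscale : ∀ t ∈ Set.uIoc (0:ℝ) 1, Complex.log (1 - -(c * r) * t) / t
      = r • dslope (fun s : ℝ => Complex.log (1 + c * s)) 0 (r * t) := by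
    intro t ht
    have ht0 : t ≠ 0 := (Set.uIoc_of_le (zero_le_one (α := ℝ)) ▸ ht).1.ne'
    rcases eq_or_ne r 0 with rfl | hr
    · simp
    rw [dslope_of_ne _ (mul_ne_zero hr ht0), slope_def_module]
    have hr' : (r : ℂ) ≠ 0 := Complex.ofReal_ne_zero.2 hr
    have ht' : (t : ℂ) ≠ 0 := Complex.ofReal_ne_zero.2 ht0
    simp only [Complex.real_smul, Complex.ofReal_zero, mul_zero, add_zero, Complex.log_one]
    push_cast
    field_simp
    ring_nf
  rw [Li2, intervalIntegral.integral_congr_ae (Filter.Eventually.of_forall hscale),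
    intervalIntegral.integral_smul, intervalIntegral.smul_integral_comp_mul_left, mul_zero, mul_one]

lemma hasDerivAt_Li2_neg_mul_ofReal {c : ℂ} (hc : c.im ≠ 0) (r : ℝ) :
    HasDerivAt (fun r : ℝ => Li2 (-(c * r)))
      (-dslope (fun s : ℝ => Complex.log (1 + c * s)) 0 r) r := by
  have hf : Differentiable ℝ (fun s : ℝ => Complex.log (1 + c * s)) := fun s =>
    ((((hasDerivAt_id (s : ℂ)).const_mul c).const_add 1).clog
      (one_add_mul_ofReal_mem_slitPlane hc s)).comp_ofReal.differentiableAt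
  have hcont : Continuous (dslope (fun s : ℝ => Complex.log (1 + c * s)) 0) :=
    continuousOn_univ.1
      ((continuousOn_dslope Filter.univ_mem).2 ⟨hf.continuous.continuousOn, hf 0⟩)
  simp_rw [Li2_neg_mul_ofReal]
  exact (hcont.integral_hasStrictDerivAt 0 r).hasDerivAt.neg

lemma hasDerivAt_Li2_neg_mul_exp {c : ℂ} (hc : c.im ≠ 0) (u : ℝ) :
    HasDerivAt (fun u : ℝ => Li2 (-(c * Real.exp u))) (-Complex.log (1 + c * Real.exp u)) u := by
  have h := (hasDerivAt_Li2_neg_mul_ofReal hc (Real.exp u)).scomp u (Real.hasDerivAt_exp u)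
  rw [dslope_of_ne _ (Real.exp_pos u).ne', slope_def_module] at h
  refine h.congr_deriv ?_
  simp [Complex.real_smul]

lemma exp_ofReal_add_mul_I (u v : ℝ) :
    Complex.exp (u + v * I) = Complex.exp (v * I) * Real.exp u := by
  rw [Complex.ofReal_exp, ← Complex.exp_add, add_comm]

lemma hasDerivAt_im_Li2_neg_exp {v : ℝ} (hv : Real.sin v ≠ 0) (u : ℝ) :
    HasDerivAt (fun u : ℝ => (Li2 (-Complex.exp (u + v * I))).im)
      (-(Complex.log (1 + Complex.exp (u + v * I))).im) u := by
  simp_rw [exp_ofReal_add_mul_I]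
  exact (hasDerivAt_Li2_neg_mul_exp (by rwa [Complex.exp_ofReal_mul_I_im]) u).complex_im

lemma hasDerivAt_im_log_one_add_exp {v : ℝ} (hv : Real.sin v ≠ 0) (u : ℝ) :
    HasDerivAt (fun u : ℝ => (Complex.log (1 + Complex.exp (u + v * I))).im)
      ((1 + Complex.exp (-(u + v * I)))⁻¹).im u := by
  have hmem : 1 + Complex.exp (u + v * I) ∈ slitPlane := by
    rw [exp_ofReal_add_mul_I]
    exact one_add_mul_ofReal_mem_slitPlane (by rwa [Complex.exp_ofReal_mul_I_im]) _
  have h : HasDerivAt (fun w => Complex.log (1 + Complex.exp (w + v * I)))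
      (1 + Complex.exp (-(u + v * I)))⁻¹ u := by
    simpa only [Function.comp_def, mul_one] using
      (hasDerivAt_log_one_add_exp hmem).comp (u : ℂ) ((hasDerivAt_id' _).add_const (v * I))
  exact h.comp_ofReal.complex_im

theorem stmt_19 :
    (∀ (u : ℝ), ∀ v ∈ Set.Ioo (0 : ℝ) π,
      0 < ((1 + Complex.exp (-((u : ℂ) + (v : ℂ) * Complex.I)))⁻¹).im) ∧
    (∀ (u : ℝ), ∀ v ∈ Set.Ioo (-π) (0 : ℝ),
      ((1 + Complex.exp (-((u : ℂ) + (v : ℂ) * Complex.I)))⁻¹).im < 0) ∧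
    (∀ v ∈ Set.Ioo (-π) (0 : ℝ),
      StrictConcaveOn ℝ (Set.univ : Set ℝ)
        (fun u : ℝ => -(Li2 (-Complex.exp ((u : ℂ) + (v : ℂ) * Complex.I))).im)) ∧
    (∀ v ∈ Set.Ioo (0 : ℝ) π,
      StrictConcaveOn ℝ (Set.univ : Set ℝ)
        (fun u : ℝ => (Li2 (-Complex.exp ((u : ℂ) + (v : ℂ) * Complex.I))).im)) := by
  have sin_pos : ∀ v ∈ Set.Ioo (0 : ℝ) π, 0 < Real.sin v := fun v hv =>
    Real.sin_pos_of_pos_of_lt_pi hv.1 hv.2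
  have sin_neg : ∀ v ∈ Set.Ioo (-π) (0 : ℝ), Real.sin v < 0 := fun v hv =>
    Real.sin_neg_of_neg_of_neg_pi_lt hv.2 hv.1
  have im_pos : ∀ (u : ℝ), ∀ v ∈ Set.Ioo (0 : ℝ) π,
      0 < ((1 + Complex.exp (-((u : ℂ) + (v : ℂ) * I)))⁻¹).im := fun u v hv =>
    im_inv_one_add_exp_neg_pos (by simpa using sin_pos v hv)
  have im_neg : ∀ (u : ℝ), ∀ v ∈ Set.Ioo (-π) (0 : ℝ),
      ((1 + Complex.exp (-((u : ℂ) + (v : ℂ) * I)))⁻¹).im < 0 := fun u v hv =>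
    im_inv_one_add_exp_neg_neg (by simpa using sin_neg v hv)
  refine ⟨im_pos, im_neg, fun v hv => ?_, fun v hv => ?_⟩
  · have hv' := (sin_neg v hv).ne
    exact strictConcaveOn_univ_of_hasDerivAt_of_hasDerivAt_neg
      (fun u => (hasDerivAt_im_Li2_neg_exp hv' u).neg.congr_deriv (neg_neg _))
      (hasDerivAt_im_log_one_add_exp hv') (fun u => im_neg u v hv)
  · have hv' := (sin_pos v hv).ne'
    exact strictConcaveOn_univ_of_hasDerivAt_of_hasDerivAt_neg (hasDerivAt_im_Li2_neg_exp hv')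
      (fun u => (hasDerivAt_im_log_one_add_exp hv' u).neg)
      (fun u => neg_neg_of_pos (im_pos u v hv))
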